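/- arXiv:2605.17918 — 3 statements merged into one kernel-verified Lean document; each statement's English description precedes it below -/
import Mathlib

section
/- A one-dimensional continuous probability distribution with continuous strictly increasing CDF admits at most one differentiable measure-preserving automorphism other than the identity. -/
/-!
Writing `F` for the CDF of `p`, a measure-preserving map `m` satisfies
`F (m x) = p (m ⁻¹' Iic (m x))`. A continuous bijection of `ℝ` is strictly monotone or strictly
antitone. In the monotone case the preimage is `Iic x`, so `F ∘ m = F` and `m = id` since `F` is
injective. In the antitone case the preimage is `Ici x`, and as `p` has no atoms, `F (m x) = 1 - F x`.
This pins down `F ∘ m`, hence `m`, uniquely.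
-/

open MeasureTheory Set ProbabilityTheory

variable {p : Measure ℝ} [IsProbabilityMeasure p] {m : ℝ → ℝ}

lemma nullSingletonClass_of_continuous_cdf (h : Continuous (cdf p)) : NullSingletonClass p where
  measure_singleton x := by
    rw [← measure_cdf p, StieltjesFunction.measure_singleton,
      h.continuousAt.continuousWithinAt.leftLim_eq, sub_self, ENNReal.ofReal_zero]

lemma cdf_comp_of_strictMono (hmc : Measurable m) (hmono : StrictMono m) (hm : p.map m = p)
    (x : ℝ) : cdf p (m x) = cdf p x := by
  have hpre : m ⁻¹' Iic (m x) = Iic x := by ext; simp [hmono.le_iff_le]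
  rw [cdf_eq_real, cdf_eq_real, ← hm, map_measureReal_apply hmc measurableSet_Iic, hpre, hm]

lemma cdf_comp_of_strictAnti [NullSingletonClass p] (hmc : Measurable m) (hanti : StrictAnti m)
    (hm : p.map m = p) (x : ℝ) : cdf p (m x) = 1 - cdf p x := by
  have hpre : m ⁻¹' Iic (m x) = Ici x := by ext; simp [hanti.le_iff_ge]
  rw [cdf_eq_real, cdf_eq_real, ← hm, map_measureReal_apply hmc measurableSet_Iic, hpre, hm,
    ← compl_Iio, probReal_compl_eq_one_sub measurableSet_Iio, measureReal_congr Iio_ae_eq_Iic]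

lemma strictAnti_of_map_eq_of_ne_id (hF : StrictMono (cdf p)) (hmc : Continuous m)
    (hinj : Function.Injective m) (hm : p.map m = p) (hne : m ≠ id) : StrictAnti m :=
  (hmc.strictMono_of_inj hinj).resolve_left fun hmono =>
    hne <| funext fun x => hF.injective (cdf_comp_of_strictMono hmc.measurable hmono hm x)

lemma cdf_comp_eq_one_sub_of_map_eq_of_ne_id (hF : StrictMono (cdf p))
    (hFcont : Continuous (cdf p)) (hmc : Continuous m) (hinj : Function.Injective m)
    (hm : p.map m = p) (hne : m ≠ id) (x : ℝ) : cdf p (m x) = 1 - cdf p x :=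
  have := nullSingletonClass_of_continuous_cdf hFcont
  cdf_comp_of_strictAnti hmc.measurable (strictAnti_of_map_eq_of_ne_id hF hmc hinj hm hne) hm x

/-- A one-dimensional continuous distribution with continuous strictly
increasing CDF admits at most one differentiable measure-preserving
automorphism other than the identity. -/
theorem stmt_4 (p : Measure ℝ) [IsProbabilityMeasure p]
    (F : ℝ → ℝ)
    (hFdef : ∀ x, F x = (p (Iic x)).toReal)
    (hFcont : Continuous F) (hFmono : StrictMono F)
    (m₁ m₂ : ℝ → ℝ)
    (hm₁diff : Differentiable ℝ m₁) (hm₁bij : Function.Bijective m₁)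
    (hm₁ : Measure.map m₁ p = p) (hm₁ne : m₁ ≠ id)
    (hm₂diff : Differentiable ℝ m₂) (hm₂bij : Function.Bijective m₂)
    (hm₂ : Measure.map m₂ p = p) (hm₂ne : m₂ ≠ id) :
    m₁ = m₂ := by
  obtain rfl : F = cdf p := funext fun x => (hFdef x).trans (cdf_eq_real p x).symm
  funext x
  apply hFmono.injective
  rw [cdf_comp_eq_one_sub_of_map_eq_of_ne_id hFmono hFcont hm₁diff.continuous hm₁bij.injective
      hm₁ hm₁ne x,
    cdf_comp_eq_one_sub_of_map_eq_of_ne_id hFmono hFcont hm₂diff.continuous hm₂bij.injective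
      hm₂ hm₂ne x]
end

section
/- Let p be a one-dimensional continuous distribution with continuous strictly increasing CDF F, and let m be a smooth measure-preserving automorphism of p with m ≠ id. Then m has at most one fixed point, i.e., there do not exist two distinct points x₁ ≠ x₂ with m(x₁) = x₁ and m(x₂) = x₂. -/
open MeasureTheory Set

/-- A non-identity smooth measure-preserving automorphism of a continuous
one-dimensional distribution (with continuous strictly increasing CDF) has at
most one fixed point. -/
theorem stmt_6 (p : Measure ℝ) [IsProbabilityMeasure p]
    (F : ℝ → ℝ)
    (hFdef : ∀ x, F x = (p (Iic x)).toReal)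
    (hFcont : Continuous F) (hFmono : StrictMono F)
    (m : ℝ → ℝ)
    (hmsmooth : ContDiff ℝ (⊤ : ℕ∞) m) (hmbij : Function.Bijective m)
    (hm : Measure.map m p = p) (hmne : m ≠ id) :
    ¬ ∃ x₁ x₂ : ℝ, x₁ ≠ x₂ ∧ m x₁ = x₁ ∧ m x₂ = x₂ := by
  rintro ⟨x₁, x₂, hne, h1, h2⟩
  have hmcont : Continuous m := hmsmooth.continuous
  rcases hmcont.strictMono_of_inj hmbij.1 with hmono | hanti
  · -- increasing case: m = id
    apply hmne
    funext x
    have key : F (m x) = F x := by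
      rw [hFdef, hFdef]
      congr 1
      conv_lhs => rw [← hm]
      rw [Measure.map_apply hmcont.measurable measurableSet_Iic]
      congr 1
      ext y
      simp [hmono.le_iff_le]
    exact hFmono.injective key
  · -- decreasing case: at most one fixed point
    rcases lt_trichotomy x₁ x₂ with h | h | h
    · have := hanti h
      rw [h1, h2] at this
      exact absurd this (not_lt.mpr h.le)
    · exact hne h
    · have := hanti h
      rw [h1, h2] at this
      exact absurd this (not_lt.mpr h.le)
end

section
/- Let p₁ and p₂ be one-dimensional continuous distributions (with continuous strictly increasing CDFs). Then there exist at most two smooth bijections r : ℝ → ℝ such that r_# p₁ = p₂. -/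
open MeasureTheory Set

lemma key_mono (p₁ p₂ : Measure ℝ) (F₂ : ℝ → ℝ)
    (hF₂def : ∀ x, F₂ x = (p₂ (Iic x)).toReal)
    (r : ℝ → ℝ) (hr : Continuous r) (hm : StrictMono r)
    (hpush : Measure.map r p₁ = p₂) (x : ℝ) :
    F₂ (r x) = (p₁ (Iic x)).toReal := by
  have h : r ⁻¹' Iic (r x) = Iic x := by ext y; simp [hm.le_iff_le]
  rw [hF₂def, ← hpush, Measure.map_apply hr.measurable measurableSet_Iic, h]

lemma key_anti (p₁ p₂ : Measure ℝ) (F₂ : ℝ → ℝ)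
    (hF₂def : ∀ x, F₂ x = (p₂ (Iic x)).toReal)
    (r : ℝ → ℝ) (hr : Continuous r) (hm : StrictAnti r)
    (hpush : Measure.map r p₁ = p₂) (x : ℝ) :
    F₂ (r x) = (p₁ (Ici x)).toReal := by
  have h : r ⁻¹' Iic (r x) = Ici x := by ext y; simp [hm.le_iff_ge]
  rw [hF₂def, ← hpush, Measure.map_apply hr.measurable measurableSet_Iic, h]

lemma eq_of_same_dir (p₁ p₂ : Measure ℝ) (F₂ : ℝ → ℝ)
    (hF₂def : ∀ x, F₂ x = (p₂ (Iic x)).toReal) (hF₂mono : StrictMono F₂)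
    (r s : ℝ → ℝ) (hrc : Continuous r) (hsc : Continuous s)
    (hrpush : Measure.map r p₁ = p₂) (hspush : Measure.map s p₁ = p₂)
    (h : (StrictMono r ∧ StrictMono s) ∨ (StrictAnti r ∧ StrictAnti s)) :
    r = s := by
  funext x
  apply hF₂mono.injective
  rcases h with ⟨h1, h2⟩ | ⟨h1, h2⟩
  · rw [key_mono p₁ p₂ F₂ hF₂def r hrc h1 hrpush,
      key_mono p₁ p₂ F₂ hF₂def s hsc h2 hspush]
  · rw [key_anti p₁ p₂ F₂ hF₂def r hrc h1 hrpush,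
      key_anti p₁ p₂ F₂ hF₂def s hsc h2 hspush]

/-- For two one-dimensional continuous distributions `p₁, p₂` (with continuous
strictly increasing CDFs), there exist at most two smooth bijections pushing
`p₁` forward to `p₂`: three pairwise distinct such maps lead to a
contradiction. -/
theorem stmt_7 (p₁ p₂ : Measure ℝ) [IsProbabilityMeasure p₁] [IsProbabilityMeasure p₂]
    (F₁ F₂ : ℝ → ℝ)
    (hF₁def : ∀ x, F₁ x = (p₁ (Iic x)).toReal)
    (hF₁cont : Continuous F₁) (hF₁mono : StrictMono F₁)
    (hF₂def : ∀ x, F₂ x = (p₂ (Iic x)).toReal)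
    (hF₂cont : Continuous F₂) (hF₂mono : StrictMono F₂)
    (r₁ r₂ r₃ : ℝ → ℝ)
    (hr₁ : ContDiff ℝ (⊤ : ℕ∞) r₁) (hr₁bij : Function.Bijective r₁)
    (hr₁push : Measure.map r₁ p₁ = p₂)
    (hr₂ : ContDiff ℝ (⊤ : ℕ∞) r₂) (hr₂bij : Function.Bijective r₂)
    (hr₂push : Measure.map r₂ p₁ = p₂)
    (hr₃ : ContDiff ℝ (⊤ : ℕ∞) r₃) (hr₃bij : Function.Bijective r₃)
    (hr₃push : Measure.map r₃ p₁ = p₂)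
    (h12 : r₁ ≠ r₂) (h23 : r₂ ≠ r₃) (h13 : r₁ ≠ r₃) :
    False := by
  have c₁ := hr₁.continuous
  have c₂ := hr₂.continuous
  have c₃ := hr₃.continuous
  have m₁ := c₁.strictMono_of_inj hr₁bij.injective
  have m₂ := c₂.strictMono_of_inj hr₂bij.injective
  have m₃ := c₃.strictMono_of_inj hr₃bij.injective
  rcases m₁ with m₁ | m₁ <;> rcases m₂ with m₂ | m₂ <;> rcases m₃ with m₃ | m₃
  · exact h12 (eq_of_same_dir p₁ p₂ F₂ hF₂def hF₂mono r₁ r₂ c₁ c₂ hr₁push hr₂push (Or.inl ⟨m₁, m₂⟩))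
  · exact h12 (eq_of_same_dir p₁ p₂ F₂ hF₂def hF₂mono r₁ r₂ c₁ c₂ hr₁push hr₂push (Or.inl ⟨m₁, m₂⟩))
  · exact h13 (eq_of_same_dir p₁ p₂ F₂ hF₂def hF₂mono r₁ r₃ c₁ c₃ hr₁push hr₃push (Or.inl ⟨m₁, m₃⟩))
  · exact h23 (eq_of_same_dir p₁ p₂ F₂ hF₂def hF₂mono r₂ r₃ c₂ c₃ hr₂push hr₃push (Or.inr ⟨m₂, m₃⟩))
  · exact h23 (eq_of_same_dir p₁ p₂ F₂ hF₂def hF₂mono r₂ r₃ c₂ c₃ hr₂push hr₃push (Or.inl ⟨m₂, m₃⟩))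
  · exact h13 (eq_of_same_dir p₁ p₂ F₂ hF₂def hF₂mono r₁ r₃ c₁ c₃ hr₁push hr₃push (Or.inr ⟨m₁, m₃⟩))
  · exact h12 (eq_of_same_dir p₁ p₂ F₂ hF₂def hF₂mono r₁ r₂ c₁ c₂ hr₁push hr₂push (Or.inr ⟨m₁, m₂⟩))
  · exact h12 (eq_of_same_dir p₁ p₂ F₂ hF₂def hF₂mono r₁ r₂ c₁ c₂ hr₁push hr₂push (Or.inr ⟨m₁, m₂⟩))
end
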